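/- The Serre diagonal Δ on cellular chains of the n-cube I^n, defined on the top cell by Δ(e_1 ⊗ ⋯ ⊗ e_n) = Σ_{X ⊆ {1,…,n}} ± (face obtained by collapsing coordinates in X to 0) ⊗ (face obtained by collapsing coordinates not in X to 1), is coassociative: (Δ ⊗ id) ∘ Δ = (id ⊗ Δ) ∘ Δ. -/

import Mathlib

/-!
Applied to a cell `c`, both composites are signed sums over the flags `B ⊆ A ⊆ free c` of
`frontFace c A ⊗ frontFace (backFace c A) B ⊗ backFace c B`: the right side expands directly in
`(A, B)`, the left side in `(B, A \ B)`, and the face identities match the terms. The two signs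
agree because each exponent counts the pairs `i < j` of free coordinates with `i` in an earlier
block than `j` of the decomposition `free c = B ⊔ (A \ B) ⊔ (free c \ A)`.
-/

noncomputable section

namespace Stmt9

open TensorProduct

/-- A cell of the standard `n`-cube `I^n`: each coordinate is either collapsed
to `0` (`some false`), collapsed to `1` (`some true`), or free (`none`). -/
def Cell (n : ℕ) : Type := Fin n → Option Bool

instance (n : ℕ) : DecidableEq (Cell n) := by
  unfold Cell; infer_instance

/-- The set of free coordinates of a cell. -/
def free {n : ℕ} (c : Cell n) : Finset (Fin n) :=
  @Finset.filter (Fin n) (fun i => c i = none) (fun _ => inferInstance) Finset.univ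

/-- `ρ(X) = #{(i,j) ∈ X × X̄ : i < j}`, where `X̄` is the complement of `X`
inside the free coordinates. -/
def rho {n : ℕ} (c : Cell n) (X : Finset (Fin n)) : ℕ :=
  ((X ×ˢ (free c \ X)).filter fun p => p.1 < p.2).card

/-- The front face `c/X`: collapse the coordinates in `X` to `0`. -/
def frontFace {n : ℕ} (c : Cell n) (X : Finset (Fin n)) : Cell n :=
  fun i => if i ∈ X then some false else c i

/-- The back face `c_{X̄}`: collapse the free coordinates not in `X` to `1`. -/
def backFace {n : ℕ} (c : Cell n) (X : Finset (Fin n)) : Cell n :=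
  fun i => if i ∈ free c \ X then some true else c i

/-- Cellular chains of the `n`-cube. -/
def Chains (n : ℕ) : Type := Cell n →₀ ℤ

instance (n : ℕ) : AddCommGroup (Chains n) := by unfold Chains; infer_instance
instance (n : ℕ) : Module ℤ (Chains n) := by unfold Chains; infer_instance

/-- The Serre diagonal on a single cell:
`Δ(c) = Σ_{X ⊆ free c} (−1)^{ρ(X)} (c/X) ⊗ (c_{X̄})`. -/
def serreGen (n : ℕ) (c : Cell n) : Chains n ⊗[ℤ] Chains n :=
  ∑ X ∈ (free c).powerset,
    ((-1 : ℤ) ^ rho c X) •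
      ((Finsupp.single (frontFace c X) (1 : ℤ)) ⊗ₜ[ℤ] (Finsupp.single (backFace c X) (1 : ℤ)))

/-- The Serre diagonal on cellular chains of the `n`-cube, extended linearly. -/
def serre (n : ℕ) : Chains n →ₗ[ℤ] Chains n ⊗[ℤ] Chains n :=
  Finsupp.linearCombination ℤ (serreGen n)

end Stmt9

/- The signs in `serreGen` act by `zsmul`, which on a tensor product over `ℤ` is not reducibly
the `TensorProduct` scalar action, so Mathlib's `smul` lemmas do not rewrite them. -/
theorem TensorProduct.zsmul_tmul {M N : Type*} [AddCommGroup M] [AddCommGroup N] [Module ℤ M]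
    [Module ℤ N] (k : ℤ) (m : M) (n : N) : (k • m) ⊗ₜ[ℤ] n = k • (m ⊗ₜ[ℤ] n) :=
  (AddMonoidHom.mk' (· ⊗ₜ[ℤ] n) fun a b => add_tmul a b n).map_zsmul k m

theorem TensorProduct.tmul_zsmul {M N : Type*} [AddCommGroup M] [AddCommGroup N] [Module ℤ M]
    [Module ℤ N] (k : ℤ) (m : M) (n : N) : m ⊗ₜ[ℤ] (k • n) = k • (m ⊗ₜ[ℤ] n) :=
  (AddMonoidHom.mk' (m ⊗ₜ[ℤ] ·) fun a b => tmul_add m a b).map_zsmul k n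

theorem Finset.zsmul_sum {ι G : Type*} [AddCommGroup G] (k : ℤ) (s : Finset ι) (f : ι → G) :
    k • ∑ i ∈ s, f i = ∑ i ∈ s, k • f i :=
  Finset.smul_sum

theorem Finset.sum_powerset_sum_powerset_sdiff {α M : Type*} [DecidableEq α] [AddCommMonoid M]
    (s : Finset α) (f : Finset α → Finset α → M) :
    ∑ X ∈ s.powerset, ∑ Y ∈ (s \ X).powerset, f X Y =
      ∑ A ∈ s.powerset, ∑ B ∈ A.powerset, f B (A \ B) := by
  rw [Finset.sum_sigma', Finset.sum_sigma']
  refine Finset.sum_nbij' (fun p => ⟨p.1 ∪ p.2, p.1⟩) (fun p => ⟨p.2, p.1 \ p.2⟩)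
    ?_ ?_ ?_ ?_ ?_ <;> rintro ⟨X, Y⟩ h <;> simp only [Finset.mem_sigma, Finset.mem_powerset] at h ⊢
  · exact ⟨Finset.union_subset h.1 (h.2.trans Finset.sdiff_subset), Finset.subset_union_left⟩
  · exact ⟨h.2.trans h.1, Finset.sdiff_subset_sdiff h.1 le_rfl⟩
  · simp [Finset.union_sdiff_cancel_left (Finset.disjoint_of_subset_right h.2 Finset.disjoint_sdiff)]
  · simp [Finset.union_sdiff_of_subset h.2]
  · simp [Finset.union_sdiff_cancel_left (Finset.disjoint_of_subset_right h.2 Finset.disjoint_sdiff)]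

section LtPairs

variable {α : Type*} [LinearOrder α] [DecidableEq α]

def ltPairs (X Y : Finset α) : ℕ := ((X ×ˢ Y).filter fun p => p.1 < p.2).card

theorem ltPairs_union_left {X Y : Finset α} (Z : Finset α) (h : Disjoint X Y) :
    ltPairs (X ∪ Y) Z = ltPairs X Z + ltPairs Y Z := by
  rw [ltPairs, Finset.union_product, Finset.filter_union, Finset.card_union_of_disjoint]
  · rfl
  exact Finset.disjoint_filter_filter (Finset.disjoint_product.mpr (Or.inl h))

theorem ltPairs_union_right (X : Finset α) {Y Z : Finset α} (h : Disjoint Y Z) :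
    ltPairs X (Y ∪ Z) = ltPairs X Y + ltPairs X Z := by
  rw [ltPairs, Finset.product_union, Finset.filter_union, Finset.card_union_of_disjoint]
  · rfl
  exact Finset.disjoint_filter_filter (Finset.disjoint_product.mpr (Or.inr h))

end LtPairs

namespace Stmt9

open TensorProduct

variable {n : ℕ} {c : Cell n} {A B : Finset (Fin n)}

theorem mem_free {i : Fin n} : i ∈ free c ↔ c i = none := by
  simp [free]

theorem free_frontFace (c : Cell n) (X : Finset (Fin n)) :
    free (frontFace c X) = free c \ X := by
  ext i
  by_cases h : i ∈ X <;> simp [mem_free, frontFace, h]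

theorem free_backFace (hA : A ⊆ free c) : free (backFace c A) = A := by
  ext i
  by_cases h : i ∈ A
  · simp [mem_free, backFace, h, mem_free.mp (hA h)]
  · by_cases h' : c i = none <;> simp [mem_free, backFace, h, h']

theorem frontFace_frontFace (c : Cell n) (X Y : Finset (Fin n)) :
    frontFace (frontFace c X) Y = frontFace c (X ∪ Y) := by
  funext i
  by_cases hX : i ∈ X <;> by_cases hY : i ∈ Y <;> simp [frontFace, hX, hY]

theorem backFace_frontFace_sdiff (c : Cell n) (A B : Finset (Fin n)) :
    backFace (frontFace c B) (A \ B) = frontFace (backFace c A) B := by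
  funext i
  by_cases hiB : i ∈ B
  · simp [backFace, frontFace, free_frontFace, hiB]
  · by_cases hiA : i ∈ A <;> simp [backFace, frontFace, free_frontFace, hiA, hiB]

theorem backFace_backFace (hA : A ⊆ free c) (hB : B ⊆ A) :
    backFace (backFace c A) B = backFace c B := by
  funext i
  by_cases hiB : i ∈ B
  · simp [backFace, free_backFace hA, hiB, hB hiB]
  · by_cases hiA : i ∈ A
    · simp [backFace, free_backFace hA, hiA, hiB, hA hiA]
    · simp [backFace, free_backFace hA, hiA, hiB]

theorem rho_eq_ltPairs (c : Cell n) (X : Finset (Fin n)) : rho c X = ltPairs X (free c \ X) :=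
  rfl

theorem rho_add_rho_frontFace_sdiff (hA : A ⊆ free c) (hB : B ⊆ A) :
    rho c B + rho (frontFace c B) (A \ B) = rho c A + rho (backFace c A) B := by
  have hdisj : Disjoint (A \ B) (free c \ A) :=
    Finset.disjoint_of_subset_left Finset.sdiff_subset Finset.disjoint_sdiff
  have hfree : free c \ B = (A \ B) ∪ (free c \ A) := by
    ext i
    have := @hA i
    have := @hB i
    simp only [Finset.mem_sdiff, Finset.mem_union]
    tauto
  have hsplit := ltPairs_union_left (free c \ A) (Finset.disjoint_sdiff : Disjoint B (A \ B))
  rw [Finset.union_sdiff_of_subset hB] at hsplit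
  rw [rho_eq_ltPairs, rho_eq_ltPairs, rho_eq_ltPairs, rho_eq_ltPairs, free_frontFace,
    free_backFace hA, hfree, Finset.union_sdiff_cancel_left hdisj, ltPairs_union_right _ hdisj, hsplit]
  ring

def chain (c : Cell n) : Chains n := Finsupp.single c 1

theorem serreGen_eq (c : Cell n) : serreGen n c = ∑ X ∈ (free c).powerset,
    ((-1 : ℤ) ^ rho c X) • (chain (frontFace c X) ⊗ₜ[ℤ] chain (backFace c X)) := rfl

theorem serre_chain (c : Cell n) : serre n (chain c) = serreGen n c :=
  (Finsupp.linearCombination_single ℤ 1 c).trans (one_smul ℤ _)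

section

/- `serre n` lands in `Chains n ⊗ Chains n` with the `ℤ`-module structure
`AddCommGroup.toIntModule`, while `TensorProduct.map` and `TensorProduct.assoc` use
`TensorProduct.instModule`; the two agree only up to unfolding, which blocks rewriting.
`serre'` is `serre` retyped with the latter. -/
attribute [local instance 2000] TensorProduct.instModule

def serre' (n : ℕ) : Chains n →ₗ[ℤ] Chains n ⊗[ℤ] Chains n := serre n

end

theorem serre'_chain (c : Cell n) : serre' n (chain c) = serreGen n c := serre_chain c

theorem serre'_coassoc_chain (c : Cell n) :
    TensorProduct.assoc ℤ (Chains n) (Chains n) (Chains n)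
        (TensorProduct.map (serre' n) LinearMap.id (serre' n (chain c))) =
      TensorProduct.map LinearMap.id (serre' n) (serre' n (chain c)) := by
  simp only [serre'_chain, serreGen_eq, map_sum, map_zsmul, map_tmul, LinearMap.id_coe, id_eq,
    sum_tmul, tmul_sum, zsmul_tmul, tmul_zsmul, assoc_tmul, free_frontFace, Finset.zsmul_sum,
    ← mul_zsmul, ← pow_add]
  rw [Finset.sum_powerset_sum_powerset_sdiff]
  refine Finset.sum_congr rfl fun A hA => ?_
  rw [Finset.mem_powerset] at hA
  rw [free_backFace hA]
  refine Finset.sum_congr rfl fun B hB => ?_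
  rw [Finset.mem_powerset] at hB
  rw [frontFace_frontFace, Finset.union_sdiff_of_subset hB, backFace_frontFace_sdiff,
    backFace_backFace hA hB, rho_add_rho_frontFace_sdiff hA hB]

/-- The Serre diagonal is coassociative: `(Δ ⊗ id) ∘ Δ = (id ⊗ Δ) ∘ Δ`. -/
theorem serre_coassoc (n : ℕ) :
    (TensorProduct.assoc ℤ (Chains n) (Chains n) (Chains n)).toLinearMap ∘ₗ
        (TensorProduct.map (serre n) LinearMap.id) ∘ₗ serre n =
      (TensorProduct.map LinearMap.id (serre n)) ∘ₗ serre n :=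
  -- `serre'` unfolds to `serre` and `Finsupp.lsingle c 1` to `chain c`
  Finsupp.lhom_ext' fun c => LinearMap.ext_ring (serre'_coassoc_chain c)

end Stmt9
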